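/- Let G be a finite group of order n generated by a subset S with e ∉ S, S = S⁻¹ and |S| = 2. Then the signed domination number of the Cayley graph Cay(S:G) equals n − 4 if and only if G is isomorphic to one of the following groups: ℤ₆, ℤ₇, ℤ₈, the symmetric group S₃, or the dihedral group of order 8. -/

import Mathlib

/-!
Write `S = {a, b}`. Since `S` is inverse-closed, either `b = a⁻¹`, and then `G` is cyclic
generated by `a`, or `a` and `b` are involutions, and then `G` is dihedral of order
`2 · orderOf (a * b)`. In both cases a walk that keeps multiplying on the left by elements of `S`
(`k ↦ aᵏ`, resp. the alternating products of `a` and `b`) runs through all of `G` and closes up;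
as the Cayley graph is `2`-regular, it is the cycle `C_n`.

On the `2`-regular graph `C_n` the closed-neighbourhood conditions sum to `n ≤ 3 γ_S`, and
`γ_S ≡ n (mod 2)`; putting `-1` on every third vertex attains the resulting bound
`γ_S(C_n) = n - 2 ⌊n / 3⌋`. This is `n - 4` iff `n ∈ {6, 7, 8}`, and the groups of these orders
generated by such an `S` are `ℤ₆, ℤ₇, ℤ₈`, `D₃ ≅ S₃` and `D₄`.
-/

/-- The Cayley graph `Cay(S:G)` of a group `G` with connection set `S`:
vertices are the group elements, and `a`, `b` are adjacent iff `a * b⁻¹ ∈ S`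
(for an inverse-closed `S` not containing the identity). -/
def cayleyGraph {G : Type*} [Group G] (S : Set G) : SimpleGraph G :=
  SimpleGraph.fromRel (fun a b => a * b⁻¹ ∈ S)

open Classical in
/-- The signed domination number of a finite simple graph: the minimum weight
`∑ v, g v` over all signed dominating functions, i.e. functions `g : V → {±1}`
whose sum over every closed neighborhood `N[v]` is positive. -/
noncomputable def signedDomNum {V : Type*} [Fintype V] (Γ : SimpleGraph V) : ℤ :=
  sInf {w : ℤ | ∃ g : V → ℤ, (∀ v, g v = 1 ∨ g v = -1) ∧
    (∀ v : V, 0 < g v + ∑ u : V, if Γ.Adj v u then g u else 0) ∧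
    w = ∑ v : V, g v}

open SimpleGraph Finset

section SignedDomination

variable {V W : Type*} [Fintype V] [Fintype W] {Γ : SimpleGraph V}

def IsSignedDominating (Γ : SimpleGraph V) [DecidableRel Γ.Adj] (g : V → ℤ) : Prop :=
  (∀ v, g v = 1 ∨ g v = -1) ∧ ∀ v, 0 < g v + ∑ u ∈ Γ.neighborFinset v, g u

lemma signedDomNum_eq_sInf (Γ : SimpleGraph V) [DecidableRel Γ.Adj] :
    signedDomNum Γ = sInf ((fun g => ∑ v, g v) '' {g | IsSignedDominating Γ g}) := by
  simp only [signedDomNum, IsSignedDominating, neighborFinset_eq_filter, Finset.sum_filter]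
  congr 1
  ext w
  simp only [Set.mem_ofPred_eq, Set.mem_image, eq_comm (a := w), and_assoc]
  congr!

lemma IsSignedDominating.comp_iso [DecidableRel Γ.Adj] {Δ : SimpleGraph W} [DecidableRel Δ.Adj]
    (e : Γ ≃g Δ) {g : W → ℤ} (hg : IsSignedDominating Δ g) : IsSignedDominating Γ (g ∘ e) := by
  refine ⟨fun v => hg.1 (e v), fun v => ?_⟩
  have hsum : ∑ u ∈ Γ.neighborFinset v, g (e u) = ∑ u ∈ Δ.neighborFinset (e v), g u := by
    simp only [neighborFinset_eq_filter, Finset.sum_filter]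
    rw [← e.toEquiv.sum_comp]
    simp [e.map_adj_iff]
  simpa [hsum] using hg.2 (e v)

lemma signedDomNum_congr {Δ : SimpleGraph W} (e : Γ ≃g Δ) : signedDomNum Γ = signedDomNum Δ := by
  classical
  rw [signedDomNum_eq_sInf, signedDomNum_eq_sInf]
  congr 1
  ext w
  constructor
  · rintro ⟨g, hg, rfl⟩
    exact ⟨g ∘ e.symm, hg.comp_iso e.symm, e.symm.toEquiv.sum_comp g⟩
  · rintro ⟨g, hg, rfl⟩
    exact ⟨g ∘ e, hg.comp_iso e, e.toEquiv.sum_comp g⟩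

lemma sum_sum_neighborFinset_eq_sum_degree_mul (Γ : SimpleGraph V) [DecidableRel Γ.Adj]
    (g : V → ℤ) : ∑ v, ∑ u ∈ Γ.neighborFinset v, g u = ∑ u, Γ.degree u * g u := by
  rw [Finset.sum_comm' (t' := univ) (s' := fun u => Γ.neighborFinset u) (by simp [adj_comm])]
  simp [card_neighborFinset_eq_degree]

lemma IsSignedDominating.card_le_mul_sum [DecidableRel Γ.Adj] {d : ℕ}
    (hΓ : Γ.IsRegularOfDegree d) {g : V → ℤ} (hg : IsSignedDominating Γ g) :
    (Fintype.card V : ℤ) ≤ (d + 1) * ∑ v, g v := by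
  calc (Fintype.card V : ℤ) = ∑ _v : V, 1 := by simp
    _ ≤ ∑ v, (g v + ∑ u ∈ Γ.neighborFinset v, g u) := sum_le_sum fun v _ => hg.2 v
    _ = (d + 1) * ∑ v, g v := by
      rw [sum_add_distrib, sum_sum_neighborFinset_eq_sum_degree_mul]
      simp only [hΓ.degree_eq, ← mul_sum]
      ring

lemma IsSignedDominating.even_sum_sub_card [DecidableRel Γ.Adj] {g : V → ℤ}
    (hg : IsSignedDominating Γ g) : Even (∑ v, g v - Fintype.card V) := by
  have : ∑ v, g v - Fintype.card V = ∑ v, (g v - 1) := by simp [sum_sub_distrib]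
  rw [this]
  refine even_sum _ fun v _ => ?_
  rcases hg.1 v with h | h <;> simp [h]

end SignedDomination

section Cycle

lemma cycleGraph_isRegularOfDegree_two {n : ℕ} (hn : 3 ≤ n) :
    (cycleGraph n).IsRegularOfDegree 2 := by
  obtain ⟨k, rfl⟩ := Nat.exists_eq_add_of_le' hn
  exact fun _ => cycleGraph_degree_three_le

def everyThirdNeg (n : ℕ) (v : Fin n) : ℤ :=
  if 3 ∣ v.val + 1 then -1 else 1

/-- The vertices carrying `-1` are at least three apart, also across the wrap-around
`k + 2 → 0`, since `0` and `1` carry `+1`. -/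
lemma isSignedDominating_everyThirdNeg (k : ℕ) :
    IsSignedDominating (cycleGraph (k + 3)) (everyThirdNeg (k + 3)) := by
  refine ⟨fun v => ?_, fun v => ?_⟩ <;> unfold everyThirdNeg
  · split_ifs <;> simp
  have hsucc : (v + 1).val = if v.val = k + 2 then 0 else v.val + 1 := by
    rw [Fin.val_add_one]; simp [Fin.ext_iff]
  have hpred : (v - 1).val = if v.val = 0 then k + 2 else v.val - 1 := by
    rw [Fin.coe_sub_one]; simp only [Fin.ext_iff, Fin.val_zero]
  have hv := v.isLt
  have hne : v - 1 ≠ v + 1 := by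
    rw [Ne, Fin.ext_iff]
    split_ifs at hsucc hpred <;> omega
  rw [cycleGraph_neighborFinset, sum_pair hne]
  split_ifs at hsucc hpred <;> split_ifs <;> omega

lemma sum_everyThirdNeg (n : ℕ) : ∑ v, everyThirdNeg n v = n - 2 * (n / 3 : ℕ) := by
  have hcard := card_filter_add_card_filter_not (s := range n) (p := (3 ∣ · + 1))
  rw [Nat.card_multiples, card_range] at hcard
  simp only [everyThirdNeg]
  rw [Fin.sum_univ_eq_sum_range (fun i => if 3 ∣ i + 1 then (-1 : ℤ) else 1), sum_ite,
    sum_const, sum_const, Nat.card_multiples]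
  simp only [mul_neg, mul_one, nsmul_eq_mul]
  omega

lemma signedDomNum_cycleGraph {n : ℕ} (hn : 3 ≤ n) :
    signedDomNum (cycleGraph n) = n - 2 * (n / 3 : ℕ) := by
  rw [signedDomNum_eq_sInf]
  refine IsLeast.csInf_eq ⟨?_, ?_⟩
  · obtain ⟨k, rfl⟩ := Nat.exists_eq_add_of_le' hn
    exact ⟨_, isSignedDominating_everyThirdNeg k, sum_everyThirdNeg _⟩
  · rintro _ ⟨g, hg, rfl⟩
    have hlow := hg.card_le_mul_sum (cycleGraph_isRegularOfDegree_two hn)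
    obtain ⟨c, hc⟩ := hg.even_sum_sub_card
    simp only [Fintype.card_fin] at hlow hc ⊢
    omega

end Cycle

section Regular

variable {V W : Type*} {Γ : SimpleGraph V} {Δ : SimpleGraph W}

lemma SimpleGraph.Hom.map_adj_iff_of_isRegularOfDegree [Γ.LocallyFinite] [Δ.LocallyFinite]
    {d : ℕ} (f : Γ →g Δ) (hf : Function.Injective f) (hΓ : Γ.IsRegularOfDegree d)
    (hΔ : Δ.IsRegularOfDegree d) {v w : V} : Δ.Adj (f v) (f w) ↔ Γ.Adj v w := by
  classical
  have hsub : (Γ.neighborFinset v).map ⟨f, hf⟩ ⊆ Δ.neighborFinset (f v) := by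
    intro x hx
    obtain ⟨u, hu, rfl⟩ := mem_map.1 hx
    simpa using f.map_adj ((mem_neighborFinset _ _ _).1 hu)
  have heq : (Γ.neighborFinset v).map ⟨f, hf⟩ = Δ.neighborFinset (f v) :=
    eq_of_subset_of_card_le hsub (by simp [card_neighborFinset_eq_degree, hΓ.degree_eq,
      hΔ.degree_eq])
  rw [← mem_neighborFinset, ← heq]
  simp

theorem nonempty_cycleGraph_iso_of_isRegularOfDegree_two [Fintype V] [DecidableRel Γ.Adj]
    (hΓ : Γ.IsRegularOfDegree 2) {n : ℕ} (hn : 3 ≤ n) (hV : Fintype.card V = n) (w : ℕ → V)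
    (hw : ∀ k, Γ.Adj (w k) (w (k + 1))) (hper : w n = w 0) (hinj : Set.InjOn w (Set.Iio n)) :
    Nonempty (cycleGraph n ≃g Γ) := by
  obtain ⟨k, rfl⟩ := Nat.exists_eq_add_of_le' hn
  have hsucc (i : Fin (k + 3)) : w (i + 1).val = w (i.val + 1) := by
    rw [Fin.val_add_one]
    split_ifs with h
    · rw [h, Fin.val_last, ← hper]
    · rfl
  let f : cycleGraph (k + 3) →g Γ :=
    { toFun := fun i => w i.val
      map_rel' := by
        intro i j hij
        rcases (cycleGraph_adj (n := k + 1)).1 hij with h | h <;>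
          rw [sub_eq_iff_eq_add'] at h <;> subst h <;> rw [hsucc]
        exacts [(hw _).symm, hw _] }
  have hf : Function.Injective f := fun i j h => Fin.val_injective (hinj i.isLt j.isLt h)
  have hfb : Function.Bijective f :=
    (Fintype.bijective_iff_injective_and_card f).2 ⟨hf, by simp [hV]⟩
  exact ⟨⟨Equiv.ofBijective f hfb,
    f.map_adj_iff_of_isRegularOfDegree hf (cycleGraph_isRegularOfDegree_two hn) hΓ⟩⟩

end Regular

section Cayley

variable {G : Type*} [Group G] {S : Set G}

lemma cayleyGraph_adj (he : (1 : G) ∉ S) (hinv : S⁻¹ = S) {a b : G} :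
    (cayleyGraph S).Adj a b ↔ a * b⁻¹ ∈ S := by
  rw [cayleyGraph, SimpleGraph.fromRel_adj]
  refine ⟨fun ⟨_, h⟩ => h.elim id fun h => ?_, fun h => ⟨fun hab => ?_, Or.inl h⟩⟩
  · rw [← hinv, Set.mem_inv, mul_inv_rev, inv_inv]
    exact h
  · rw [hab, mul_inv_cancel] at h
    exact he h

lemma cayleyGraph_isRegularOfDegree [Fintype G] [DecidableRel (cayleyGraph S).Adj]
    (he : (1 : G) ∉ S) (hinv : S⁻¹ = S) : (cayleyGraph S).IsRegularOfDegree S.ncard := by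
  classical
  intro x
  rw [← card_neighborFinset_eq_degree, Set.ncard_eq_toFinset_card']
  refine card_nbij' (fun y => x * y⁻¹) (fun s => s⁻¹ * x) ?_ ?_ ?_ ?_ <;> intro y hy <;>
    simp_all [cayleyGraph_adj he hinv]

lemma three_le_card_of_pair [Fintype G] {a b : G} (he : (1 : G) ∉ ({a, b} : Set G))
    (hab : a ≠ b) : 3 ≤ Fintype.card G := by
  classical
  have h1 : (1 : G) ∉ ({a, b} : Finset G) := by simpa using he
  calc 3 = ({1, a, b} : Finset G).card := by rw [card_insert_of_notMem h1, card_pair hab]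
    _ ≤ Fintype.card G := card_le_univ _

lemma eq_inv_or_mul_self_eq_one_of_pair {a b : G} (hinv : ({a, b} : Set G)⁻¹ = {a, b})
    (hab : a ≠ b) : b = a⁻¹ ∨ a * a = 1 ∧ b * b = 1 := by
  have ha : a⁻¹ ∈ ({a, b} : Set G) := by rw [← hinv]; simp
  have hb : b⁻¹ ∈ ({a, b} : Set G) := by rw [← hinv]; simp
  simp only [Set.mem_insert_iff, Set.mem_singleton_iff] at ha hb
  rcases ha with ha | ha
  · refine Or.inr ⟨mul_eq_one_iff_eq_inv.2 ha.symm, mul_eq_one_iff_eq_inv.2 ?_⟩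
    rcases hb with hb | hb
    · exact absurd (by rw [← inv_inj, hb, ha]) hab
    · exact hb.symm
  · exact Or.inl ha.symm

end Cayley

section Dihedral

open DihedralGroup

variable {G : Type*} [Group G] {s r : G}

lemma zpow_cast_of_intCast_eq {x : ZMod (orderOf r)} {y : ℤ} (h : (y : ZMod (orderOf r)) = x) :
    r ^ (x.cast : ℤ) = r ^ y := by
  rw [zpow_eq_zpow_iff_modEq, ← ZMod.intCast_eq_intCast_iff, ZMod.intCast_zmod_cast, h]

lemma mul_zpow_mul_of_mul_mul_eq_inv (hs : s * s = 1) (hsr : s * r * s = r⁻¹) (c : ℤ) :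
    s * r ^ c * s = r ^ (-c) := by
  have hs' : s⁻¹ = s := inv_eq_of_mul_eq_one_right hs
  calc s * r ^ c * s = (s * r * s⁻¹) ^ c := by rw [conj_zpow, hs']
    _ = r ^ (-c) := by rw [hs', hsr, inv_zpow']

noncomputable def dihedralGroupHom (hs : s * s = 1) (hsr : s * r * s = r⁻¹) :
    DihedralGroup (orderOf r) →* G where
  toFun x := match x with
    | .r i => r ^ (i.cast : ℤ)
    | .sr i => s * r ^ (i.cast : ℤ)
  map_one' := by rw [one_def]; simp
  map_mul' := by
    rintro (i | i) (j | j) <;>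
      simp only [r_mul_r, r_mul_sr, sr_mul_r, sr_mul_sr]
    · rw [zpow_cast_of_intCast_eq (y := i.cast + j.cast) (by simp), zpow_add]
    · have h := mul_zpow_mul_of_mul_mul_eq_inv hs hsr (-i.cast)
      rw [neg_neg] at h
      rw [zpow_cast_of_intCast_eq (y := -i.cast + j.cast) (by simp; ring), zpow_add, ← h]
      simp only [mul_assoc, ← mul_assoc s s, hs, one_mul]
    · rw [zpow_cast_of_intCast_eq (y := i.cast + j.cast) (by simp), zpow_add, mul_assoc]
    · rw [zpow_cast_of_intCast_eq (y := -i.cast + j.cast) (by simp; ring), zpow_add,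
        ← mul_zpow_mul_of_mul_mul_eq_inv hs hsr, mul_assoc (s * _)]

lemma dihedralGroupHom_sr (hs : s * s = 1) (hsr : s * r * s = r⁻¹) (i : ℤ) :
    dihedralGroupHom hs hsr (sr i) = s * r ^ i :=
  congrArg (s * ·) (zpow_cast_of_intCast_eq rfl)

lemma notMem_zpowers_of_mul_mul_eq_inv (hs : s * s = 1) (hsr : s * r * s = r⁻¹) (hs1 : s ≠ 1)
    (hrs : r ≠ s) : s ∉ Subgroup.zpowers r := by
  rintro ⟨c, rfl : r ^ c = s⟩
  have hr : r = r⁻¹ := by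
    rwa [(Commute.refl r).zpow_left c |>.eq, mul_assoc, hs, mul_one] at hsr
  have hr2 : r ^ (2 : ℤ) = 1 := by
    rw [zpow_two, ← mul_inv_cancel r, ← hr]
  rcases Int.even_or_odd' c with ⟨k, rfl | rfl⟩
  · exact hs1 (by rw [zpow_mul, hr2, one_zpow])
  · exact hrs (by rw [zpow_add, zpow_mul, hr2, one_zpow, one_mul, zpow_one])

lemma dihedralGroupHom_injective (hs : s * s = 1) (hsr : s * r * s = r⁻¹)
    (hr : s ∉ Subgroup.zpowers r) : Function.Injective (dihedralGroupHom hs hsr) := by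
  rw [injective_iff_map_eq_one]
  rintro (i | i) h
  · have hdvd : (orderOf r : ℤ) ∣ i.cast := orderOf_dvd_iff_zpow_eq_one.2 h
    rw [← ZMod.intCast_zmod_eq_zero_iff_dvd, ZMod.intCast_zmod_cast] at hdvd
    rw [hdvd, r_zero]
  · exact absurd (Subgroup.mem_zpowers_iff.2 ⟨-i.cast, by
      rw [zpow_neg, eq_comm, eq_inv_iff_mul_eq_one]; exact h⟩) hr

variable {t : G}

lemma dihedralGroupHom_sr_zero (hs : s * s = 1) (hsr : s * r * s = r⁻¹) :
    dihedralGroupHom hs hsr (sr 0) = s := by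
  simpa using dihedralGroupHom_sr hs hsr 0

lemma mul_mul_mul_self_eq_inv (hs : s * s = 1) (ht : t * t = 1) :
    s * (s * t) * s = (s * t)⁻¹ := by
  rw [mul_inv_rev, inv_eq_of_mul_eq_one_right hs, inv_eq_of_mul_eq_one_right ht, ← mul_assoc,
    hs, one_mul]

lemma dihedralGroupHom_sr_one (hs : s * s = 1) (ht : t * t = 1) :
    dihedralGroupHom hs (mul_mul_mul_self_eq_inv hs ht) (sr 1) = t := by
  simpa [← mul_assoc, hs] using dihedralGroupHom_sr hs (mul_mul_mul_self_eq_inv hs ht) 1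

lemma dihedralGroupHom_surjective (hs : s * s = 1) (ht : t * t = 1)
    (hgen : Subgroup.closure {s, t} = ⊤) :
    Function.Surjective (dihedralGroupHom hs (mul_mul_mul_self_eq_inv hs ht)) := by
  rw [← MonoidHom.range_eq_top, eq_top_iff, ← hgen, Subgroup.closure_le,
    Set.insert_subset_iff, Set.singleton_subset_iff]
  exact ⟨⟨sr 0, dihedralGroupHom_sr_zero hs _⟩, ⟨sr 1, dihedralGroupHom_sr_one hs ht⟩⟩

noncomputable def mulEquivOfInvolutions (hs : s * s = 1) (ht : t * t = 1) (hs1 : s ≠ 1)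
    (ht1 : t ≠ 1) (hgen : Subgroup.closure {s, t} = ⊤) : DihedralGroup (orderOf (s * t)) ≃* G :=
  have hsr := mul_mul_mul_self_eq_inv hs ht
  MulEquiv.ofBijective _
    ⟨dihedralGroupHom_injective hs hsr <| notMem_zpowers_of_mul_mul_eq_inv hs hsr hs1 (by simpa),
      dihedralGroupHom_surjective hs ht hgen⟩

end Dihedral

namespace DihedralGroup

def zigzag (n k : ℕ) : DihedralGroup n :=
  if Even k then r (k / 2 : ℕ) else sr ((k / 2 : ℕ) + 1)

lemma zigzag_succ (n k : ℕ) :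
    zigzag n (k + 1) = (if Even k then sr 1 else sr 0) * zigzag n k := by
  rcases Nat.even_or_odd' k with ⟨j, rfl | rfl⟩
  · have hodd : ¬ Even (2 * j + 1) := by simp
    simp only [zigzag, hodd, even_two_mul, if_true, if_false, sr_mul_r,
      show (2 * j + 1) / 2 = j by omega, show 2 * j / 2 = j by omega]
    rw [add_comm]
  · have hodd : ¬ Even (2 * j + 1) := by simp
    have heven : Even (2 * j + 1 + 1) := by simp [Nat.even_add_one]
    simp only [zigzag, hodd, heven, if_true, if_false, sr_mul_sr,
      show (2 * j + 1) / 2 = j by omega, show (2 * j + 1 + 1) / 2 = j + 1 by omega]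
    simp

lemma zigzag_two_mul_self (n : ℕ) : zigzag n (2 * n) = zigzag n 0 := by
  simp [zigzag]

lemma zigzag_injOn (n : ℕ) : Set.InjOn (zigzag n) (Set.Iio (2 * n)) := by
  intro k hk l hl h
  simp only [Set.mem_Iio] at hk hl
  unfold zigzag at h
  split_ifs at h with hk2 hl2 hl2 <;> simp only [r.injEq, sr.injEq, add_left_inj] at h <;>
    rw [ZMod.natCast_eq_natCast_iff', Nat.mod_eq_of_lt (by omega), Nat.mod_eq_of_lt (by omega)] at h
  all_goals rw [Nat.even_iff] at hk2 hl2; omega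

end DihedralGroup

section CayleyCycle

variable {G : Type*} [Group G]

def IsCayleyCycle (S : Set G) (n : ℕ) (w : ℕ → G) : Prop :=
  (∀ k, w (k + 1) * (w k)⁻¹ ∈ S) ∧ w n = w 0 ∧ Set.InjOn w (Set.Iio n)

lemma zpowers_eq_top_of_closure_pair_inv {a : G} (hgen : Subgroup.closure {a, a⁻¹} = ⊤) :
    Subgroup.zpowers a = ⊤ := by
  rw [eq_top_iff, ← hgen, Subgroup.closure_le, Set.insert_subset_iff, Set.singleton_subset_iff]
  exact ⟨Subgroup.mem_zpowers a, inv_mem (Subgroup.mem_zpowers a)⟩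

lemma isCayleyCycle_pow [Fintype G] {a : G} (hgen : Subgroup.zpowers a = ⊤) :
    IsCayleyCycle {a, a⁻¹} (Fintype.card G) (a ^ ·) := by
  have hord : orderOf a = Fintype.card G := by
    rw [orderOf_eq_card_of_zpowers_eq_top hgen, Nat.card_eq_fintype_card]
  refine ⟨fun k => by simp [pow_succ'], by simp [pow_card_eq_one], ?_⟩
  rw [← hord]
  exact pow_injOn_Iio_orderOf

lemma isCayleyCycle_mulEquivOfInvolutions_zigzag [Fintype G] {s t : G} (hs : s * s = 1)
    (ht : t * t = 1) (hs1 : s ≠ 1) (ht1 : t ≠ 1) (hgen : Subgroup.closure {s, t} = ⊤) :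
    IsCayleyCycle {s, t} (Fintype.card G)
      (mulEquivOfInvolutions hs ht hs1 ht1 hgen ∘ DihedralGroup.zigzag _) := by
  set e := mulEquivOfInvolutions hs ht hs1 ht1 hgen
  have hcard : Fintype.card G = 2 * orderOf (s * t) := by
    rw [← Nat.card_eq_fintype_card, ← Nat.card_congr e.toEquiv, DihedralGroup.nat_card]
  refine ⟨fun k => ?_, ?_, ?_⟩
  · simp only [Function.comp_apply, DihedralGroup.zigzag_succ, map_mul, mul_inv_cancel_right]
    split_ifs
    · exact Or.inr (dihedralGroupHom_sr_one hs ht :)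
    · exact Or.inl (dihedralGroupHom_sr_zero hs (mul_mul_mul_self_eq_inv hs ht) :)
  · simp only [hcard, Function.comp_apply, DihedralGroup.zigzag_two_mul_self]
  · rw [hcard]
    exact e.injective.comp_injOn (DihedralGroup.zigzag_injOn _)

theorem nonempty_cycleGraph_iso_cayleyGraph_pair [Fintype G] {a b : G}
    (hgen : Subgroup.closure {a, b} = ⊤) (he : (1 : G) ∉ ({a, b} : Set G))
    (hinv : ({a, b} : Set G)⁻¹ = {a, b}) (hab : a ≠ b) :
    Nonempty (cycleGraph (Fintype.card G) ≃g cayleyGraph {a, b}) := by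
  classical
  obtain ⟨w, hw, hper, hinj⟩ : ∃ w, IsCayleyCycle {a, b} (Fintype.card G) w := by
    rcases eq_inv_or_mul_self_eq_one_of_pair hinv hab with rfl | ⟨ha, hb⟩
    · exact ⟨_, isCayleyCycle_pow (zpowers_eq_top_of_closure_pair_inv hgen)⟩
    · have ha1 : a ≠ 1 := fun h => he (Or.inl h.symm)
      have hb1 : b ≠ 1 := fun h => he (Or.inr h.symm)
      exact ⟨_, isCayleyCycle_mulEquivOfInvolutions_zigzag ha hb ha1 hb1 hgen⟩
  have hreg := cayleyGraph_isRegularOfDegree he hinv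
  rw [Set.ncard_pair hab] at hreg
  exact nonempty_cycleGraph_iso_of_isRegularOfDegree_two hreg (three_le_card_of_pair he hab) rfl
    w (fun k => ((cayleyGraph_adj he hinv).2 (hw k)).symm) hper hinj

end CayleyCycle

section Classification

def dihedralGroupThreeToPerm : DihedralGroup 3 → Equiv.Perm (Fin 3)
  | .r i => finRotate 3 ^ i.val
  | .sr i => Equiv.swap 0 1 * finRotate 3 ^ i.val

noncomputable def dihedralGroupThreeMulEquiv : DihedralGroup 3 ≃* Equiv.Perm (Fin 3) :=
  MulEquiv.ofBijective (MonoidHom.mk' dihedralGroupThreeToPerm (by decide)) (by decide)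

variable {G : Type*} [Group G]

lemma card_eq_of_nonempty_mulEquiv
    (h : Nonempty (G ≃* Multiplicative (ZMod 6)) ∨ Nonempty (G ≃* Multiplicative (ZMod 7)) ∨
      Nonempty (G ≃* Multiplicative (ZMod 8)) ∨ Nonempty (G ≃* Equiv.Perm (Fin 3)) ∨
      Nonempty (G ≃* DihedralGroup 4)) :
    Nat.card G = 6 ∨ Nat.card G = 7 ∨ Nat.card G = 8 := by
  rcases h with h | h | h | h | h <;> obtain ⟨e⟩ := h <;> rw [Nat.card_congr e.toEquiv] <;>
    simp [Fintype.card_perm, DihedralGroup.card, Nat.factorial]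

lemma nonempty_mulEquiv_of_card_eq [Fintype G] {a b : G} (hgen : Subgroup.closure {a, b} = ⊤)
    (he : (1 : G) ∉ ({a, b} : Set G)) (hinv : ({a, b} : Set G)⁻¹ = {a, b}) (hab : a ≠ b)
    (hcard : Nat.card G = 6 ∨ Nat.card G = 7 ∨ Nat.card G = 8) :
    Nonempty (G ≃* Multiplicative (ZMod 6)) ∨ Nonempty (G ≃* Multiplicative (ZMod 7)) ∨
      Nonempty (G ≃* Multiplicative (ZMod 8)) ∨ Nonempty (G ≃* Equiv.Perm (Fin 3)) ∨
      Nonempty (G ≃* DihedralGroup 4) := by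
  rcases eq_inv_or_mul_self_eq_one_of_pair hinv hab with rfl | ⟨ha, hb⟩
  · have hcyc : IsCyclic G :=
      isCyclic_iff_exists_zpowers_eq_top.2 ⟨a, zpowers_eq_top_of_closure_pair_inv hgen⟩
    have e := (zmodCyclicMulEquiv hcyc).symm
    rcases hcard with h | h | h <;> rw [h] at e
    exacts [Or.inl ⟨e⟩, Or.inr (Or.inl ⟨e⟩), Or.inr (Or.inr (Or.inl ⟨e⟩))]
  · have ha1 : a ≠ 1 := fun h => he (Or.inl h.symm)
    have hb1 : b ≠ 1 := fun h => he (Or.inr h.symm)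
    obtain ⟨m, hm, ⟨e⟩⟩ : ∃ m, Nat.card G = 2 * m ∧ Nonempty (DihedralGroup m ≃* G) :=
      ⟨_, by rw [← Nat.card_congr (mulEquivOfInvolutions ha hb ha1 hb1 hgen).toEquiv,
        DihedralGroup.nat_card], ⟨mulEquivOfInvolutions ha hb ha1 hb1 hgen⟩⟩
    obtain rfl | rfl : m = 3 ∨ m = 4 := by omega
    · exact Or.inr (Or.inr (Or.inr (Or.inl ⟨e.symm.trans dihedralGroupThreeMulEquiv⟩)))
    · exact Or.inr (Or.inr (Or.inr (Or.inr ⟨e.symm⟩)))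

end Classification

theorem stmt_10 {G : Type*} [Group G] [Fintype G] (n : ℕ)
    (hn : Fintype.card G = n) (S : Set G)
    (hgen : Subgroup.closure S = ⊤) (he : (1 : G) ∉ S) (hinv : S⁻¹ = S)
    (hcard : S.ncard = 2) :
    signedDomNum (cayleyGraph S) = (n : ℤ) - 4 ↔
      (Nonempty (G ≃* Multiplicative (ZMod 6)) ∨
       Nonempty (G ≃* Multiplicative (ZMod 7)) ∨
       Nonempty (G ≃* Multiplicative (ZMod 8)) ∨
       Nonempty (G ≃* Equiv.Perm (Fin 3)) ∨
       Nonempty (G ≃* DihedralGroup 4)) := by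
  obtain ⟨a, b, hab, rfl⟩ := Set.ncard_eq_two.mp hcard
  obtain ⟨e⟩ := nonempty_cycleGraph_iso_cayleyGraph_pair hgen he hinv hab
  have hn3 : 3 ≤ n := hn ▸ three_le_card_of_pair he hab
  have hnat : Nat.card G = n := Nat.card_eq_fintype_card.trans hn
  rw [← signedDomNum_congr e, hn, signedDomNum_cycleGraph hn3]
  constructor
  · intro h
    exact nonempty_mulEquiv_of_card_eq hgen he hinv hab (by omega)
  · intro h
    have := card_eq_of_nonempty_mulEquiv h
    omega
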